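/- arXiv:2210.14668 — 5 statements merged into one kernel-verified Lean document; each statement's English description precedes it below -/
import Mathlib

section
/- The Kronecker coefficient g_{(1,1),(1,1)}^{(1,1)} equals 0, while g_{(2,2),(2,2)}^{(2,2)} equals 1; in particular the Kronecker coefficients do not satisfy the saturation property g_{kλ,kμ}^{kν} ≠ 0 ⟹ g_{λμ}^{ν} ≠ 0. -/
open MvPolynomial

/-- Power sum polynomial `p_r` in `d` variables. -/
noncomputable def powSum (d r : ℕ) : MvPolynomial (Fin d) ℤ := ∑ i, X i ^ r

/-- The power sum polynomial associated to a permutation: the product of `p_c` over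
cycle lengths `c` of the permutation, including fixed points. -/
noncomputable def permPowSum (d : ℕ) (σ : Equiv.Perm (Fin d)) : MvPolynomial (Fin d) ℤ :=
  (σ.cycleType.map (powSum d)).prod * (powSum d 1) ^ (d - σ.cycleType.sum)

/-- The Vandermonde product `a_δ = ∏_{i<j} (x_i - x_j)`. -/
noncomputable def vandermonde (d : ℕ) : MvPolynomial (Fin d) ℤ :=
  ∏ p ∈ Finset.univ.filter (fun p : Fin d × Fin d => p.1 < p.2), (X p.1 - X p.2)

/-- The exponent `λ + δ` where `δ = (d-1, d-2, …, 0)`; `lam` is `0`-indexed. -/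
noncomputable def staircase (d : ℕ) (lam : ℕ → ℕ) : Fin d →₀ ℕ :=
  Finsupp.equivFunOnFinite.symm (fun i => lam i.val + (d - 1 - i.val))

/-- Frobenius character formula: the irreducible character `χ^λ` of the symmetric
group `S_d` evaluated at `σ` is the coefficient of `x^{λ+δ}` in `a_δ · p_{cycletype σ}`. -/
noncomputable def chi (d : ℕ) (lam : ℕ → ℕ) (σ : Equiv.Perm (Fin d)) : ℤ :=
  coeff (staircase d lam) (vandermonde d * permPowSum d σ)

/-- The Kronecker coefficient `g_{λμ}^ν = ⟨χ^λ χ^μ, χ^ν⟩` for `S_d`. -/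
noncomputable def gKron (d : ℕ) (lam mu nu : ℕ → ℕ) : ℤ :=
  (∑ σ : Equiv.Perm (Fin d), chi d lam σ * chi d mu σ * chi d nu σ) / (d.factorial : ℤ)

/-- A partition, encoded as a weakly decreasing finitely supported function `ℕ → ℕ`
(`0`-indexed: `f 0 = λ₁`). -/
def IsPtn (f : ℕ →₀ ℕ) : Prop := ∀ i j : ℕ, i ≤ j → f j ≤ f i

/-- The size `|λ|` of a partition. -/
def psize (f : ℕ →₀ ℕ) : ℕ := f.sum fun _ n => n

/-- The padded partition `λ[d] = (d - |λ|, λ₁, λ₂, …)`. -/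
def pad (f : ℕ →₀ ℕ) (d : ℕ) : ℕ → ℕ := fun i => if i = 0 then d - psize f else f (i - 1)

/-- The one-column partition `(1,1)`. -/
def p11 : ℕ → ℕ := fun i => if i < 2 then 1 else 0

/-- The two-row partition `(2,2)`. -/
def p22 : ℕ → ℕ := fun i => if i < 2 then 2 else 0


noncomputable def toMvR {d : ℕ} (l : List ((Fin d → ℕ) × ℤ)) : MvPolynomial (Fin d) ℤ :=
  (l.map fun p => monomial (Finsupp.equivFunOnFinite.symm p.1) p.2).sum

def mulR {d : ℕ} (l₁ l₂ : List ((Fin d → ℕ) × ℤ)) : List ((Fin d → ℕ) × ℤ) :=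
  l₁.flatMap fun p => l₂.map fun q => (p.1 + q.1, p.2 * q.2)

def coeffOfR {d : ℕ} (m : Fin d → ℕ) (l : List ((Fin d → ℕ) × ℤ)) : ℤ :=
  (l.map fun p => if p.1 = m then p.2 else 0).sum

lemma symm_add {d : ℕ} (a b : Fin d → ℕ) :
    Finsupp.equivFunOnFinite.symm (a + b) =
      Finsupp.equivFunOnFinite.symm a + Finsupp.equivFunOnFinite.symm b := by
  ext i; simp

lemma toMvR_cons {d : ℕ} (p : (Fin d → ℕ) × ℤ) (l : List ((Fin d → ℕ) × ℤ)) :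
    toMvR (p :: l) = monomial (Finsupp.equivFunOnFinite.symm p.1) p.2 + toMvR l := by
  simp [toMvR]

lemma toMvR_append {d : ℕ} (l₁ l₂ : List ((Fin d → ℕ) × ℤ)) :
    toMvR (l₁ ++ l₂) = toMvR l₁ + toMvR l₂ := by
  simp [toMvR]

lemma toMvR_smul {d : ℕ} (p : (Fin d → ℕ) × ℤ) (l₂ : List ((Fin d → ℕ) × ℤ)) :
    toMvR (l₂.map fun q => (p.1 + q.1, p.2 * q.2)) =
      monomial (Finsupp.equivFunOnFinite.symm p.1) p.2 * toMvR l₂ := by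
  induction l₂ with
  | nil => simp [toMvR]
  | cons q l₂ ih2 =>
      rw [List.map_cons, toMvR_cons, toMvR_cons, mul_add, ← ih2]
      simp [symm_add, monomial_mul]

lemma toMvR_mul {d : ℕ} (l₁ l₂ : List ((Fin d → ℕ) × ℤ)) :
    toMvR (mulR l₁ l₂) = toMvR l₁ * toMvR l₂ := by
  induction l₁ with
  | nil => simp [mulR, toMvR]
  | cons p l ih =>
      rw [toMvR_cons, add_mul, ← ih]
      show toMvR ((l₂.map fun q => (p.1 + q.1, p.2 * q.2)) ++ mulR l l₂) = _
      rw [toMvR_append, toMvR_smul]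

lemma coeff_toMvR {d : ℕ} (m : Fin d → ℕ) (l : List ((Fin d → ℕ) × ℤ)) :
    coeff (Finsupp.equivFunOnFinite.symm m) (toMvR l) = coeffOfR m l := by
  induction l with
  | nil => simp [toMvR, coeffOfR]
  | cons p l ih =>
      rw [toMvR_cons, coeff_add, ih]
      simp only [coeffOfR, List.map_cons, List.sum_cons, coeff_monomial]
      congr 1
      by_cases h : p.1 = m
      · simp [h]
      · rw [if_neg h, if_neg (fun he => h (Finsupp.equivFunOnFinite.symm.injective he))]

def eRep (d : ℕ) (i : Fin d) (r : ℕ) : Fin d → ℕ := fun j => if j = i then r else 0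

lemma symm_eRep {d : ℕ} (i : Fin d) (r : ℕ) :
    Finsupp.equivFunOnFinite.symm (eRep d i r) = Finsupp.single i r := by
  ext j; simp [eRep, Finsupp.single_apply, eq_comm]

def powSumRep (d r : ℕ) : List ((Fin d → ℕ) × ℤ) := List.ofFn fun i : Fin d => (eRep d i r, (1:ℤ))

lemma powSum_eq (d r : ℕ) : powSum d r = toMvR (powSumRep d r) := by
  rw [powSum, powSumRep, toMvR, List.map_ofFn, List.sum_ofFn]
  apply Finset.sum_congr rfl
  intro i _
  simp [Function.comp, symm_eRep, X_pow_eq_monomial]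

def subRep (d : ℕ) (a b : Fin d) : List ((Fin d → ℕ) × ℤ) := [(eRep d a 1, 1), (eRep d b 1, -1)]

lemma sub_eq (d : ℕ) (a b : Fin d) : X a - X b = toMvR (subRep d a b) := by
  simp only [subRep, toMvR, List.map_cons, List.map_nil, List.sum_cons, List.sum_nil, symm_eRep,
    add_zero]
  rw [show ((monomial (Finsupp.single b 1)) (-1 : ℤ)) = -(monomial (Finsupp.single b 1)) (1:ℤ) by
    rw [← map_neg]]
  rw [← X_pow_eq_monomial, ← X_pow_eq_monomial, pow_one, pow_one, sub_eq_add_neg]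


/-! ### Reflection: coefficient of a product of lists of monomials -/

def coeffProd {d : ℕ} (m : Fin d → ℕ) :
    List (List ((Fin d → ℕ) × ℤ)) → ((Fin d → ℕ) × ℤ) → ℤ
  | [], acc => if acc.1 = m then acc.2 else 0
  | l :: ls, acc => (l.map fun p => coeffProd m ls (acc.1 + p.1, acc.2 * p.2)).sum

noncomputable def prodMv {d : ℕ} (ls : List (List ((Fin d → ℕ) × ℤ))) :
    MvPolynomial (Fin d) ℤ := (ls.map toMvR).prod

lemma coeffProd_spec {d : ℕ} (m : Fin d → ℕ) (ls : List (List ((Fin d → ℕ) × ℤ))) :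
    ∀ acc : (Fin d → ℕ) × ℤ,
      coeff (Finsupp.equivFunOnFinite.symm m)
        (monomial (Finsupp.equivFunOnFinite.symm acc.1) acc.2 * prodMv ls) =
      coeffProd m ls acc := by
  induction ls with
  | nil =>
      intro acc
      simp only [prodMv, List.map_nil, List.prod_nil, mul_one, coeff_monomial, coeffProd]
      by_cases h : acc.1 = m
      · simp [h]
      · rw [if_neg (fun he => h (Finsupp.equivFunOnFinite.symm.injective he)), if_neg h]
  | cons l ls ih =>
      intro acc
      show coeff _ (_ * (toMvR l * prodMv ls))
        = (l.map fun p => coeffProd m ls (acc.1 + p.1, acc.2 * p.2)).sum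
      induction l with
      | nil => simp [toMvR]
      | cons p l ihl =>
          rw [toMvR_cons, add_mul, mul_add, coeff_add, ihl]
          rw [show (monomial (Finsupp.equivFunOnFinite.symm acc.1)) acc.2 *
              ((monomial (Finsupp.equivFunOnFinite.symm p.1)) p.2 * prodMv ls)
            = (monomial (Finsupp.equivFunOnFinite.symm (acc.1 + p.1))) (acc.2 * p.2) * prodMv ls by
              rw [← mul_assoc, monomial_mul, symm_add]]
          rw [ih ((acc.1 + p.1, acc.2 * p.2))]
          simp

def zeroE (d : ℕ) : Fin d → ℕ := fun _ => 0

lemma coeff_prodMv {d : ℕ} (m : Fin d → ℕ) (ls : List (List ((Fin d → ℕ) × ℤ))) :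
    coeff (Finsupp.equivFunOnFinite.symm m) (prodMv ls) = coeffProd m ls (zeroE d, 1) := by
  rw [← coeffProd_spec]
  congr 1
  rw [show Finsupp.equivFunOnFinite.symm (zeroE d) = 0 by ext i; simp [zeroE]]
  simp

/-! ### The Vandermonde determinants for `d = 2, 4` -/

def vdmL4 : List (List ((Fin 4 → ℕ) × ℤ)) :=
  [subRep 4 0 1, subRep 4 0 2, subRep 4 0 3, subRep 4 1 2, subRep 4 1 3, subRep 4 2 3]

set_option maxHeartbeats 1000000 in
lemma vdm4 : vandermonde 4 = prodMv vdmL4 := by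
  rw [vandermonde, Finset.prod_filter, Fintype.prod_prod_type]
  rw [Fin.prod_univ_four, Fin.prod_univ_four, Fin.prod_univ_four, Fin.prod_univ_four,
    Fin.prod_univ_four]
  norm_num [show ¬ ((0:Fin 4) < 0) by decide, show ((0:Fin 4) < 1) by decide,
    show ((0:Fin 4) < 2) by decide, show ((0:Fin 4) < 3) by decide,
    show ¬ ((1:Fin 4) < 0) by decide, show ¬ ((1:Fin 4) < 1) by decide,
    show ((1:Fin 4) < 2) by decide, show ((1:Fin 4) < 3) by decide,
    show ¬ ((2:Fin 4) < 0) by decide, show ¬ ((2:Fin 4) < 1) by decide,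
    show ¬ ((2:Fin 4) < 2) by decide, show ((2:Fin 4) < 3) by decide,
    show ¬ ((3:Fin 4) < 0) by decide, show ¬ ((3:Fin 4) < 1) by decide,
    show ¬ ((3:Fin 4) < 2) by decide, show ¬ ((3:Fin 4) < 3) by decide]
  show _ = (List.map toMvR vdmL4).prod
  simp only [vdmL4, List.map_cons, List.map_nil, List.prod_cons, List.prod_nil, ← sub_eq, mul_one]
  ring

def vdmL2 : List (List ((Fin 2 → ℕ) × ℤ)) := [subRep 2 0 1]

lemma vdm2 : vandermonde 2 = prodMv vdmL2 := by
  rw [vandermonde, Finset.prod_filter, Fintype.prod_prod_type]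
  simp only [Fin.prod_univ_two]
  norm_num [show ¬ ((0:Fin 2) < 0) by decide, show ((0:Fin 2) < 1) by decide,
    show ¬ ((1:Fin 2) < 0) by decide, show ¬ ((1:Fin 2) < 1) by decide]
  show _ = (List.map toMvR vdmL2).prod
  simp [vdmL2, ← sub_eq]

/-! ### Target exponents -/

def m22 : Fin 4 → ℕ := fun i => p22 i.val + (4 - 1 - i.val)

lemma stair22 : staircase 4 p22 = Finsupp.equivFunOnFinite.symm m22 := rfl

def m11 : Fin 2 → ℕ := fun i => p11 i.val + (2 - 1 - i.val)

lemma stair11 : staircase 2 p11 = Finsupp.equivFunOnFinite.symm m11 := rfl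

/-! ### Character values via reflection -/

section ChiValues

set_option maxRecDepth 100000
set_option maxHeartbeats 4000000

lemma chi4_id (σ : Equiv.Perm (Fin 4)) (hc : σ.cycleType = 0) : chi 4 p22 σ = 2 := by
  rw [chi, permPowSum, hc, stair22]
  rw [show vandermonde 4 * ((Multiset.map (powSum 4) 0).prod * powSum 4 1 ^ (4 - Multiset.sum 0))
      = prodMv (vdmL4 ++ [powSumRep 4 1, powSumRep 4 1, powSumRep 4 1, powSumRep 4 1]) by
    simp only [vdm4, Multiset.map_zero, Multiset.prod_zero, Multiset.sum_zero, Nat.sub_zero,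
      prodMv, List.map_append, List.prod_append, List.map_cons, List.map_nil, List.prod_cons,
      List.prod_nil, ← powSum_eq, one_mul, mul_one]
    ring]
  rw [coeff_prodMv]
  decide

lemma chi4_2 (σ : Equiv.Perm (Fin 4)) (hc : σ.cycleType = {2}) : chi 4 p22 σ = 0 := by
  rw [chi, permPowSum, hc, stair22]
  rw [show vandermonde 4 * ((Multiset.map (powSum 4) {2}).prod * powSum 4 1 ^ (4 - Multiset.sum {2}))
      = prodMv (vdmL4 ++ [powSumRep 4 2, powSumRep 4 1, powSumRep 4 1]) by
    simp only [vdm4, Multiset.map_singleton, Multiset.prod_singleton, Multiset.sum_singleton,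
      prodMv, List.map_append, List.prod_append, List.map_cons, List.map_nil, List.prod_cons,
      List.prod_nil, ← powSum_eq, mul_one]
    ring]
  rw [coeff_prodMv]
  decide

lemma chi4_3 (σ : Equiv.Perm (Fin 4)) (hc : σ.cycleType = {3}) : chi 4 p22 σ = -1 := by
  rw [chi, permPowSum, hc, stair22]
  rw [show vandermonde 4 * ((Multiset.map (powSum 4) {3}).prod * powSum 4 1 ^ (4 - Multiset.sum {3}))
      = prodMv (vdmL4 ++ [powSumRep 4 3, powSumRep 4 1]) by
    simp only [vdm4, Multiset.map_singleton, Multiset.prod_singleton, Multiset.sum_singleton,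
      prodMv, List.map_append, List.prod_append, List.map_cons, List.map_nil, List.prod_cons,
      List.prod_nil, ← powSum_eq, mul_one]
    ring]
  rw [coeff_prodMv]
  decide

lemma chi4_4 (σ : Equiv.Perm (Fin 4)) (hc : σ.cycleType = {4}) : chi 4 p22 σ = 0 := by
  rw [chi, permPowSum, hc, stair22]
  rw [show vandermonde 4 * ((Multiset.map (powSum 4) {4}).prod * powSum 4 1 ^ (4 - Multiset.sum {4}))
      = prodMv (vdmL4 ++ [powSumRep 4 4]) by
    simp only [vdm4, Multiset.map_singleton, Multiset.prod_singleton, Multiset.sum_singleton,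
      prodMv, List.map_append, List.prod_append, List.map_cons, List.map_nil, List.prod_cons,
      List.prod_nil, ← powSum_eq, mul_one, pow_zero]
    ring]
  rw [coeff_prodMv]
  decide

lemma chi4_22 (σ : Equiv.Perm (Fin 4)) (hc : σ.cycleType = {2, 2}) : chi 4 p22 σ = 2 := by
  rw [chi, permPowSum, hc, stair22]
  rw [show vandermonde 4 *
        ((Multiset.map (powSum 4) {2, 2}).prod * powSum 4 1 ^ (4 - Multiset.sum {2, 2}))
      = prodMv (vdmL4 ++ [powSumRep 4 2, powSumRep 4 2]) by
    simp only [vdm4, Multiset.insert_eq_cons, Multiset.map_cons, Multiset.prod_cons,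
      Multiset.sum_cons, Multiset.map_singleton, Multiset.prod_singleton, Multiset.sum_singleton,
      prodMv, List.map_append, List.prod_append, List.map_cons, List.map_nil, List.prod_cons,
      List.prod_nil, ← powSum_eq, mul_one, pow_zero]
    ring]
  rw [coeff_prodMv]
  decide

lemma chi2_id (σ : Equiv.Perm (Fin 2)) (hc : σ.cycleType = 0) : chi 2 p11 σ = 1 := by
  rw [chi, permPowSum, hc, stair11]
  rw [show vandermonde 2 * ((Multiset.map (powSum 2) 0).prod * powSum 2 1 ^ (2 - Multiset.sum 0))
      = prodMv (vdmL2 ++ [powSumRep 2 1, powSumRep 2 1]) by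
    simp only [vdm2, Multiset.map_zero, Multiset.prod_zero, Multiset.sum_zero, Nat.sub_zero,
      prodMv, List.map_append, List.prod_append, List.map_cons, List.map_nil, List.prod_cons,
      List.prod_nil, ← powSum_eq, one_mul, mul_one]
    ring]
  rw [coeff_prodMv]
  decide

lemma chi2_2 (σ : Equiv.Perm (Fin 2)) (hc : σ.cycleType = {2}) : chi 2 p11 σ = -1 := by
  rw [chi, permPowSum, hc, stair11]
  rw [show vandermonde 2 * ((Multiset.map (powSum 2) {2}).prod * powSum 2 1 ^ (2 - Multiset.sum {2}))
      = prodMv (vdmL2 ++ [powSumRep 2 2]) by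
    simp only [vdm2, Multiset.map_singleton, Multiset.prod_singleton, Multiset.sum_singleton,
      prodMv, List.map_append, List.prod_append, List.map_cons, List.map_nil, List.prod_cons,
      List.prod_nil, ← powSum_eq, mul_one, pow_zero]
    ring]
  rw [coeff_prodMv]
  decide

end ChiValues

/-! ### Classification of cycle types -/

lemma ct_small {c : Multiset ℕ} (h2 : ∀ a ∈ c, 2 ≤ a) (hs : c.sum ≤ 4) :
    c = 0 ∨ c = {2} ∨ c = {3} ∨ c = {4} ∨ c = {2, 2} := by
  have hcard : 2 * Multiset.card c ≤ c.sum := by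
    calc 2 * Multiset.card c = Multiset.card c • 2 := by rw [smul_eq_mul, mul_comm]
    _ ≤ c.sum := Multiset.card_nsmul_le_sum h2
  have hc2 : Multiset.card c ≤ 2 := by omega
  interval_cases h : Multiset.card c
  · left; exact Multiset.card_eq_zero.mp h
  · obtain ⟨a, rfl⟩ := Multiset.card_eq_one.mp h
    have ha2 := h2 a (Multiset.mem_singleton_self a)
    have ha4 : a ≤ 4 := by simpa using hs
    right
    interval_cases a
    · exact Or.inl rfl
    · exact Or.inr (Or.inl rfl)
    · exact Or.inr (Or.inr (Or.inl rfl))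
  · obtain ⟨a, b, rfl⟩ := Multiset.card_eq_two.mp h
    have ha2 := h2 a (by simp)
    have hb2 := h2 b (by simp)
    have hab : a + b ≤ 4 := by
      simpa [Multiset.insert_eq_cons, Multiset.sum_cons, Multiset.sum_singleton] using hs
    have ha : a = 2 := by omega
    have hb : b = 2 := by omega
    subst ha hb
    exact Or.inr (Or.inr (Or.inr (Or.inr rfl)))

lemma ct_cases4 (σ : Equiv.Perm (Fin 4)) :
    σ.cycleType = 0 ∨ σ.cycleType = {2} ∨ σ.cycleType = {3} ∨ σ.cycleType = {4} ∨
      σ.cycleType = {2, 2} := by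
  apply ct_small (fun a ha => Equiv.Perm.two_le_of_mem_cycleType ha)
  rw [Equiv.Perm.sum_cycleType]
  exact (Finset.card_le_univ _).trans (by simp)

lemma ct_cases2 (σ : Equiv.Perm (Fin 2)) : σ.cycleType = 0 ∨ σ.cycleType = {2} := by
  have hs : σ.cycleType.sum ≤ 2 := by
    rw [Equiv.Perm.sum_cycleType]
    exact (Finset.card_le_univ _).trans (by simp)
  have h := ct_small (c := σ.cycleType) (fun a ha => Equiv.Perm.two_le_of_mem_cycleType ha)
    (hs.trans (by norm_num))
  rcases h with h | h | h | h | h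
  · exact Or.inl h
  · exact Or.inr h
  · rw [h] at hs; simp at hs
  · rw [h] at hs; simp at hs
  · rw [h] at hs; simp [Multiset.insert_eq_cons] at hs

/-! ### Computable character stand-ins -/

def K4 (σ : Equiv.Perm (Fin 4)) : ℤ :=
  if σ = 1 then 2 else if σ.support.card = 3 then -1
  else if σ.support.card = 4 ∧ σ * σ = 1 then 2 else 0

def K2 (σ : Equiv.Perm (Fin 2)) : ℤ := if σ = 1 then 1 else -1

lemma supp_card {d : ℕ} (σ : Equiv.Perm (Fin d)) : σ.support.card = σ.cycleType.sum :=
  (Equiv.Perm.sum_cycleType σ).symm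

lemma chi4_eq (σ : Equiv.Perm (Fin 4)) : chi 4 p22 σ = K4 σ := by
  have hne : σ.cycleType ≠ 0 → σ ≠ 1 := by
    intro h h1; exact h (by rw [h1, Equiv.Perm.cycleType_one])
  rcases ct_cases4 σ with h | h | h | h | h
  · rw [chi4_id σ h, K4, if_pos (Equiv.Perm.cycleType_eq_zero.mp h)]
  · rw [chi4_2 σ h, K4, if_neg (hne (by rw [h]; decide)),
      if_neg (by rw [supp_card, h]; decide),
      if_neg (by rw [supp_card, h]; intro hp; exact absurd hp.1 (by decide))]
  · rw [chi4_3 σ h, K4, if_neg (hne (by rw [h]; decide)),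
      if_pos (by rw [supp_card, h]; decide)]
  · have ho : orderOf σ = 4 := by
      rw [← Equiv.Perm.lcm_cycleType, h]; decide
    rw [chi4_4 σ h, K4, if_neg (hne (by rw [h]; decide)),
      if_neg (by rw [supp_card, h]; decide),
      if_neg (by
        rintro ⟨-, hsq⟩
        have : orderOf σ ∣ 2 := orderOf_dvd_of_pow_eq_one (by rw [pow_two]; exact hsq)
        rw [ho] at this; omega)]
  · have ho : orderOf σ = 2 := by
      rw [← Equiv.Perm.lcm_cycleType, h]; decide
    have hsq : σ * σ = 1 := by
      rw [← pow_two, ← ho]; exact pow_orderOf_eq_one σ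
    rw [chi4_22 σ h, K4, if_neg (hne (by rw [h]; decide)),
      if_neg (by rw [supp_card, h]; decide),
      if_pos ⟨by rw [supp_card, h]; decide, hsq⟩]

lemma chi2_eq (σ : Equiv.Perm (Fin 2)) : chi 2 p11 σ = K2 σ := by
  rcases ct_cases2 σ with h | h
  · rw [chi2_id σ h, K2, if_pos (Equiv.Perm.cycleType_eq_zero.mp h)]
  · rw [chi2_2 σ h, K2, if_neg (by
      intro h1; rw [h1, Equiv.Perm.cycleType_one] at h; exact absurd h (by decide))]

/-! ### The two Kronecker coefficients -/

lemma gKron2 : gKron 2 p11 p11 p11 = 0 := by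
  rw [gKron]
  rw [Finset.sum_congr rfl (fun σ _ => by rw [chi2_eq σ])]
  rw [show ∑ σ : Equiv.Perm (Fin 2), K2 σ * K2 σ * K2 σ = 0 by decide]
  simp

set_option maxRecDepth 10000 in
lemma gKron4 : gKron 4 p22 p22 p22 = 1 := by
  rw [gKron]
  rw [Finset.sum_congr rfl (fun σ _ => by rw [chi4_eq σ])]
  rw [show ∑ σ : Equiv.Perm (Fin 4), K4 σ * K4 σ * K4 σ = 24 by decide]
  rw [show (Nat.factorial 4 : ℤ) = 24 by norm_num [Nat.factorial]]
  norm_num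

/-! ### The witness partition -/

def Lptn : ℕ →₀ ℕ :=
  ⟨{0, 1}, p11, by intro a; constructor <;> (simp [p11]; omega)⟩

lemma Lptn_coe : ⇑Lptn = p11 := rfl

lemma Lptn_isPtn : IsPtn Lptn := by
  intro i j hij
  rw [Lptn_coe]
  simp only [p11]
  split <;> split <;> omega

lemma Lptn_psize : psize Lptn = 2 := by
  show Lptn.sum (fun _ n => n) = 2
  rw [Finsupp.sum]
  show ∑ a ∈ ({0, 1} : Finset ℕ), p11 a = 2
  decide

lemma two_Lptn : (fun i => 2 * Lptn i) = p22 := by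
  funext i
  rw [Lptn_coe]
  simp only [p11, p22]
  split <;> omega

/-- `g_{(1,1),(1,1)}^{(1,1)} = 0` while `g_{(2,2),(2,2)}^{(2,2)} = 1`; in particular,
the Kronecker coefficients do not satisfy the saturation property
`g_{kλ,kμ}^{kν} ≠ 0 → g_{λμ}^ν ≠ 0`. -/
theorem kron_not_saturated :
    gKron 2 p11 p11 p11 = 0 ∧ gKron 4 p22 p22 p22 = 1 ∧
    ¬ (∀ (d : ℕ) (l m n : ℕ →₀ ℕ), IsPtn l → IsPtn m → IsPtn n →
        psize l = d → psize m = d → psize n = d →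
        ∀ k : ℕ, 1 ≤ k →
          gKron (k * d) (fun i => k * l i) (fun i => k * m i) (fun i => k * n i) ≠ 0 →
          gKron d l m n ≠ 0) := by
  refine ⟨gKron2, gKron4, ?_⟩
  intro H
  have h := H 2 Lptn Lptn Lptn Lptn_isPtn Lptn_isPtn Lptn_isPtn Lptn_psize Lptn_psize Lptn_psize
    2 (by norm_num)
  rw [two_Lptn] at h
  rw [show 2 * 2 = 4 from rfl] at h
  have h4 : gKron 4 p22 p22 p22 ≠ 0 := by rw [gKron4]; norm_num
  have h2 := h h4
  rw [show gKron 2 ⇑Lptn ⇑Lptn ⇑Lptn = gKron 2 p11 p11 p11 from rfl, gKron2] at h2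
  exact h2 rfl
end

section
/- For partitions λ, μ of n whose parts all lie in the alphabet of lengths at most n, the Kostka number K_{λμ} equals the Littlewood–Richardson coefficient c_{κλ}^{ν}, where ν_i = Σ_{j≥i} μ_j and κ_i = Σ_{j≥i+1} μ_j. -/
open MvPolynomial

/-- The complete homogeneous symmetric polynomial `h_r` in `n` variables. -/
noncomputable def hsym (n r : ℕ) : MvPolynomial (Fin n) ℤ :=
  ∑ e ∈ Finset.finsuppAntidiag (Finset.univ : Finset (Fin n)) r, monomial e 1

/-- `h_z` for an integer index, with `h_z = 0` for `z < 0`. -/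
noncomputable def hsymInt (n : ℕ) (z : ℤ) : MvPolynomial (Fin n) ℤ :=
  if z < 0 then 0 else hsym n z.toNat

/-- The Schur polynomial `s_λ` in `n` variables, via the Jacobi–Trudi determinant
`s_λ = det (h_{λ_i - i + j})`. -/
noncomputable def schur (n : ℕ) (lam : ℕ → ℕ) : MvPolynomial (Fin n) ℤ :=
  Matrix.det (Matrix.of fun i j : Fin n => hsymInt n ((lam i.val : ℤ) - (i.val : ℤ) + (j.val : ℤ)))

/-- The Littlewood–Richardson coefficient `c_{κλ}^ν`, the multiplicity of `s_ν` in
`s_κ s_λ`: since `a_δ · s_κ s_λ = ∑_ν c_{κλ}^ν a_{ν+δ}`, it is the coefficient of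
`x^{ν+δ}` in `a_δ · s_κ · s_λ`. -/
noncomputable def lrCoeff (n : ℕ) (kappa lam nu : ℕ → ℕ) : ℤ :=
  coeff (staircase n nu) (vandermonde n * schur n kappa * schur n lam)

/-- The Kostka number `K_{λμ}`: the dimension of the `μ`-weight space of the irreducible
`GL_n`-representation `V(λ)`, i.e. the coefficient of the monomial `x^μ` in `s_λ`. -/
noncomputable def kostka (n : ℕ) (lam mu : ℕ → ℕ) : ℤ :=
  coeff (Finsupp.equivFunOnFinite.symm (fun i : Fin n => mu i.val)) (schur n lam)

section KostkaAux
open Finset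

noncomputable def Esub (n : ℕ) (S : Finset (Fin n)) (k : ℕ) : MvPolynomial (Fin n) ℤ :=
  ∑ T ∈ S.powersetCard k, ∏ i ∈ T, X i

noncomputable def Hsub (n : ℕ) (S : Finset (Fin n)) (k : ℕ) : MvPolynomial (Fin n) ℤ :=
  ∑ e ∈ Finset.finsuppAntidiag S k, monomial e 1

lemma Esub_zero (n : ℕ) (S : Finset (Fin n)) : Esub n S 0 = 1 := by
  simp [Esub, Finset.powersetCard_zero]

lemma Esub_of_card_lt (n : ℕ) (S : Finset (Fin n)) (k : ℕ) (h : S.card < k) :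
    Esub n S k = 0 := by
  simp [Esub, Finset.powersetCard_eq_empty.2 h]

lemma Esub_insert (n : ℕ) (S : Finset (Fin n)) (a : Fin n) (h : a ∉ S) (k : ℕ) :
    Esub n (insert a S) (k + 1) = Esub n S (k + 1) + X a * Esub n S k := by
  rw [Esub, Finset.powersetCard_succ_insert h]
  rw [Finset.sum_union]
  · congr 1
    rw [Finset.sum_image ?inj, Esub, Finset.mul_sum]
    · refine Finset.sum_congr rfl fun T hT => ?_
      rw [Finset.prod_insert]
      exact fun haT => h ((Finset.mem_powersetCard.1 hT).1 haT)
    case inj =>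
      intro T hT U hU hTU
      have hTa : a ∉ T := fun haT => h ((Finset.mem_powersetCard.1 hT).1 haT)
      have hUa : a ∉ U := fun haU => h ((Finset.mem_powersetCard.1 hU).1 haU)
      have : T = (insert a T).erase a := by rw [Finset.erase_insert hTa]
      rw [this, hTU, Finset.erase_insert hUa]
  · rw [Finset.disjoint_right]
    intro T hT hT'
    have h1 : a ∉ T := fun haT => h ((Finset.mem_powersetCard.1 hT').1 haT)
    obtain ⟨U, hU, rfl⟩ := Finset.mem_image.1 hT
    exact h1 (Finset.mem_insert_self a U)

lemma Hsub_zero (n : ℕ) (S : Finset (Fin n)) : Hsub n S 0 = 1 := by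
  simp [Hsub]

lemma Hsub_empty (n : ℕ) (k : ℕ) (hk : k ≠ 0) : Hsub n (∅ : Finset (Fin n)) k = 0 := by
  simp [Hsub, Finset.finsuppAntidiag_empty_of_ne_zero hk]



lemma Hsub_insert (n : ℕ) (S : Finset (Fin n)) (a : Fin n) (h : a ∉ S) (m : ℕ) :
    Hsub n (insert a S) m = ∑ p ∈ Finset.HasAntidiagonal.antidiagonal m, X a ^ p.1 * Hsub n S p.2 := by
  rw [Hsub, Finset.finsuppAntidiag_insert h, Finset.sum_biUnion]
  · refine Finset.sum_congr rfl fun p hp => ?_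
    rw [Finset.sum_map, Hsub, Finset.mul_sum]
    change ∑ x ∈ (finsuppAntidiag S p.2).attach, monomial (Finsupp.update (x : Fin n →₀ ℕ) a p.1) (1:ℤ) = _
    rw [Finset.sum_attach
      (finsuppAntidiag S p.2) (fun g => monomial (Finsupp.update g a p.1) (1:ℤ))]
    refine Finset.sum_congr rfl fun g hg => ?_
    have hga : g a = 0 := by
      by_contra hne
      exact h ((Finset.mem_finsuppAntidiag.1 hg).2 (Finsupp.mem_support_iff.2 hne))
    have : Finsupp.update g a p.1 = Finsupp.single a p.1 + g := by
      rw [Finsupp.update_eq_single_add_erase]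
      congr 1
      ext x
      rcases eq_or_ne x a with rfl | hx
      · simp [hga]
      · simp [Finsupp.erase_ne hx]
    rw [this, monomial_single_add]
  · intro p hp q hq hpq
    simp only [Function.onFun]
    rw [Finset.disjoint_left]
    rintro f hf hf'
    simp only [Finset.mem_map, Function.Embedding.coeFn_mk] at hf hf'
    obtain ⟨⟨g, hg⟩, -, rfl⟩ := hf
    obtain ⟨⟨g', hg'⟩, -, hEq⟩ := hf'
    apply hpq
    have h1 : q.1 = p.1 := by
      have := congrArg (fun f => f a) hEq
      change Finsupp.update g' a q.1 a = Finsupp.update g a p.1 a at this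
      simpa using this
    have h2 : p.1 + p.2 = m := Finset.HasAntidiagonal.mem_antidiagonal.1 hp
    have h3 : q.1 + q.2 = m := Finset.HasAntidiagonal.mem_antidiagonal.1 hq
    rw [Prod.ext_iff]
    omega




lemma sum_tri_comm {M : Type*} [AddCommMonoid M] (q : ℕ) (f : ℕ → ℕ → M) :
    ∑ k ∈ range (q+1), ∑ c ∈ range (q-k+1), f k c
      = ∑ c ∈ range (q+1), ∑ k ∈ range (q-c+1), f k c := by
  have key : ∀ (g : ℕ → ℕ → M), ∑ k ∈ range (q+1), ∑ c ∈ range (q-k+1), g k c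
      = ∑ k ∈ range (q+1), ∑ c ∈ range (q+1), if k + c ≤ q then g k c else 0 := by
    intro g
    refine Finset.sum_congr rfl fun k hk => ?_
    rw [Finset.mem_range] at hk
    rw [← Finset.sum_filter]
    refine (Finset.sum_congr ?_ fun c _ => rfl)
    ext c
    simp only [Finset.mem_range, Finset.mem_filter]
    omega
  rw [key, key, Finset.sum_comm]
  refine Finset.sum_congr rfl fun c _ => Finset.sum_congr rfl fun k _ => ?_
  rw [Nat.add_comm c k]

lemma Tlemma (n : ℕ) (S : Finset (Fin n)) (a : Fin n) (h : a ∉ S)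
    (hG : ∀ p, ∑ k ∈ range (p+1), (-1:MvPolynomial (Fin n) ℤ)^k * Esub n S k * Hsub n S (p - k)
        = if p = 0 then 1 else 0) (q : ℕ) :
    ∑ k ∈ range (q+1), (-1:MvPolynomial (Fin n) ℤ)^k * Esub n S k * Hsub n (insert a S) (q-k)
      = X a ^ q := by
  have step1 : ∀ k ∈ range (q+1),
      (-1:MvPolynomial (Fin n) ℤ)^k * Esub n S k * Hsub n (insert a S) (q-k)
        = ∑ c ∈ range (q-k+1), X a ^ c * ((-1:MvPolynomial (Fin n) ℤ)^k * Esub n S k * Hsub n S (q-k-c)) := by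
    intro k hk
    rw [Hsub_insert n S a h, Finset.Nat.sum_antidiagonal_eq_sum_range_succ_mk, Finset.mul_sum]
    exact Finset.sum_congr rfl fun c _ => by ring
  rw [Finset.sum_congr rfl step1, sum_tri_comm q
    (fun k c => X a ^ c * ((-1:MvPolynomial (Fin n) ℤ)^k * Esub n S k * Hsub n S (q-k-c)))]
  have step2 : ∀ c ∈ range (q+1),
      ∑ k ∈ range (q-c+1), X a ^ c * ((-1:MvPolynomial (Fin n) ℤ)^k * Esub n S k * Hsub n S (q-k-c))
        = X a ^ c * (if q - c = 0 then 1 else 0) := by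
    intro c hc
    rw [← Finset.mul_sum, ← hG (q-c)]
    refine congrArg (X a ^ c * ·) ?_
    refine Finset.sum_congr rfl fun k hk => ?_
    rw [show q - k - c = q - c - k by omega]
  rw [Finset.sum_congr rfl step2]
  rw [Finset.sum_eq_single q]
  · simp
  · intro c hc hne
    rw [Finset.mem_range] at hc
    rw [if_neg (by omega), mul_zero]
  · intro hq
    exact absurd (Finset.self_mem_range_succ q) hq

lemma Glemma (n : ℕ) (S : Finset (Fin n)) :
    ∀ p, ∑ k ∈ range (p+1), (-1:MvPolynomial (Fin n) ℤ)^k * Esub n S k * Hsub n S (p - k)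
        = if p = 0 then 1 else 0 := by
  induction S using Finset.induction_on with
  | empty =>
    intro p
    rcases Nat.eq_zero_or_pos p with rfl | hp
    · simp [Esub_zero, Hsub_zero]
    · rw [if_neg (by omega)]
      refine Finset.sum_eq_zero fun k hk => ?_
      rcases Nat.eq_zero_or_pos k with rfl | hk0
      · rw [Nat.sub_zero, Hsub_empty n p (by omega), mul_zero]
      · rw [Esub_of_card_lt n ∅ k (by simpa using hk0), mul_zero, zero_mul]
  | @insert a S ha IH =>
    intro p
    rcases Nat.eq_zero_or_pos p with rfl | hp
    · simp [Esub_zero, Hsub_zero]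
    · obtain ⟨q, rfl⟩ : ∃ q, p = q + 1 := ⟨p - 1, by omega⟩
      rw [if_neg (by omega)]
      set A := ∑ k ∈ range (q+1),
        (-1:MvPolynomial (Fin n) ℤ)^k * Esub n S (k+1) * Hsub n (insert a S) (q-k) with hA
      have hT1 := Tlemma n S a ha IH (q+1)
      have hTq := Tlemma n S a ha IH q
      rw [Finset.sum_range_succ'] at hT1
      have e1 : ∀ k ∈ range (q+1),
          (-1:MvPolynomial (Fin n) ℤ)^(k+1) * Esub n S (k+1) * Hsub n (insert a S) (q+1-(k+1))
            = -((-1:MvPolynomial (Fin n) ℤ)^k * Esub n S (k+1) * Hsub n (insert a S) (q-k)) := by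
        intro k hk
        rw [Nat.succ_sub_succ, pow_succ]
        ring
      rw [Finset.sum_congr rfl e1, Finset.sum_neg_distrib, ← hA] at hT1
      simp only [pow_zero, Esub_zero, one_mul, Nat.sub_zero] at hT1
      -- hT1 : -A + Hsub n (insert a S) (q+1) = X a ^ (q+1)
      rw [Finset.sum_range_succ']
      have e2 : ∀ k ∈ range (q+1),
          (-1:MvPolynomial (Fin n) ℤ)^(k+1) * Esub n (insert a S) (k+1) * Hsub n (insert a S) (q+1-(k+1))
            = -((-1:MvPolynomial (Fin n) ℤ)^k * Esub n S (k+1) * Hsub n (insert a S) (q-k))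
              + -(X a * ((-1:MvPolynomial (Fin n) ℤ)^k * Esub n S k * Hsub n (insert a S) (q-k))) := by
        intro k hk
        rw [Nat.succ_sub_succ, Esub_insert n S a ha, pow_succ]
        ring
      rw [Finset.sum_congr rfl e2, Finset.sum_add_distrib, Finset.sum_neg_distrib,
        Finset.sum_neg_distrib, ← Finset.mul_sum, ← hA, hTq]
      simp only [pow_zero, Esub_zero, one_mul, Nat.sub_zero]
      linear_combination hT1






lemma hsym_eq_Hsub (n r : ℕ) : hsym n r = Hsub n Finset.univ r := rfl

lemma Dlemma (n : ℕ) (r : Fin n) (m : ℕ) :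
    ∑ k ∈ range n, (-1:MvPolynomial (Fin n) ℤ)^k * Esub n (Finset.univ.erase r) k
        * hsymInt n ((m:ℤ) - k) = X r ^ m := by
  have hcard : (Finset.univ.erase r).card = n - 1 := by
    rw [Finset.card_erase_of_mem (Finset.mem_univ r), Finset.card_univ, Fintype.card_fin]
  have hn : 0 < n := r.pos
  have hval : ∀ k : ℕ, hsymInt n ((m:ℤ) - k)
      = if k ≤ m then Hsub n Finset.univ (m - k) else 0 := by
    intro k
    rcases le_or_gt k m with hkm | hkm
    · rw [if_pos hkm, hsymInt, if_neg (by omega), hsym_eq_Hsub]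
      congr 1
      omega
    · rw [if_neg (by omega), hsymInt, if_pos (by push_cast; omega)]
  simp only [hval]
  have hsub1 : range n ⊆ range (max n (m+1)) := by
    exact Finset.range_subset_range.2 (by omega)
  rw [Finset.sum_subset hsub1 (by
    intro k hk hk'
    rw [Finset.mem_range] at hk
    rw [Finset.mem_range] at hk'
    rw [Esub_of_card_lt n _ k (by omega), mul_zero, zero_mul])]
  have hsub2 : range (m+1) ⊆ range (max n (m+1)) := by
    exact Finset.range_subset_range.2 (by omega)
  rw [← Finset.sum_subset hsub2 (by
    intro k hk hk'
    rw [Finset.mem_range] at hk'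
    rw [if_neg (by omega), mul_zero])]
  have key := Tlemma n (Finset.univ.erase r) r (Finset.notMem_erase r _)
    (Glemma n _) m
  rw [Finset.insert_erase (Finset.mem_univ r)] at key
  rw [← key]
  refine Finset.sum_congr rfl fun k hk => ?_
  rw [Finset.mem_range] at hk
  rw [if_pos (by omega)]


lemma hsym_zero (n : ℕ) : hsym n 0 = 1 := by
  rw [hsym, Finset.finsuppAntidiag_zero, Finset.sum_singleton]
  simp



lemma prod_pairs_flatten {R : Type*} [CommRing R] (n : ℕ) (f : Fin n × Fin n → R) :
    ∏ p ∈ Finset.univ.filter (fun p : Fin n × Fin n => p.1 < p.2), f p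
      = ∏ i : Fin n, ∏ j ∈ Finset.Ioi i, f (i, j) := by
  rw [Finset.prod_filter]
  rw [← Finset.univ_product_univ, Finset.prod_product]
  refine Finset.prod_congr rfl fun i _ => ?_
  rw [← Finset.prod_filter]
  refine Finset.prod_congr ?_ fun j _ => rfl
  ext j
  simp [Finset.mem_Ioi]

lemma vandermonde_eq_det (n : ℕ) :
    vandermonde n
      = Matrix.det (Matrix.of fun i r : Fin n => (X r : MvPolynomial (Fin n) ℤ) ^ (n - 1 - i.val)) := by
  have h1 : (Matrix.of fun i r : Fin n => (X r : MvPolynomial (Fin n) ℤ) ^ (n - 1 - i.val))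
      = ((Matrix.vandermonde (fun r : Fin n => (X r.rev : MvPolynomial (Fin n) ℤ))).transpose).submatrix
          Fin.revPerm Fin.revPerm := by
    ext i r
    simp only [Matrix.submatrix_apply, Matrix.transpose_apply, Matrix.vandermonde, Matrix.of_apply,
      Fin.revPerm_apply, Fin.rev_rev]
    have hv : n - 1 - i.val = (i.rev : ℕ) := by
      rw [Fin.val_rev]
      omega
    rw [hv]
  rw [h1, Matrix.det_submatrix_equiv_self, Matrix.det_transpose, Matrix.det_vandermonde]
  rw [← prod_pairs_flatten n (fun p => (X p.2.rev - X p.1.rev : MvPolynomial (Fin n) ℤ)), vandermonde]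
  refine Finset.prod_nbij' (fun p => (p.2.rev, p.1.rev)) (fun p => (p.2.rev, p.1.rev))
    ?_ ?_ ?_ ?_ ?_
  · intro p hp
    simp only [Finset.mem_filter, Finset.mem_univ, true_and] at hp ⊢
    exact Fin.rev_lt_rev.2 hp
  · intro p hp
    simp only [Finset.mem_filter, Finset.mem_univ, true_and] at hp ⊢
    exact Fin.rev_lt_rev.2 hp
  · intro p hp
    simp [Fin.rev_rev]
  · intro p hp
    simp [Fin.rev_rev]
  · intro p hp
    simp [Fin.rev_rev]







noncomputable def XP (n : ℕ) (kappa : ℕ → ℕ) : Matrix (Fin n) (Fin n) (MvPolynomial (Fin n) ℤ) :=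
  Matrix.of fun i r : Fin n => (X r : MvPolynomial (Fin n) ℤ) ^ (kappa i.val + (n - 1 - i.val))

noncomputable def Mmat (n : ℕ) : Matrix (Fin n) (Fin n) (MvPolynomial (Fin n) ℤ) :=
  Matrix.of fun j r : Fin n =>
    (-1:MvPolynomial (Fin n) ℤ)^(n - 1 - j.val) * Esub n (Finset.univ.erase r) (n - 1 - j.val)

lemma JT_mul (n : ℕ) (kappa : ℕ → ℕ) :
    (Matrix.of fun i j : Fin n => hsymInt n ((kappa i.val : ℤ) - (i.val : ℤ) + (j.val : ℤ)))
        * Mmat n = XP n kappa := by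
  apply Matrix.ext
  intro i r
  rw [Matrix.mul_apply]
  show ∑ j : Fin n, hsymInt n ((kappa i.val : ℤ) - (i.val : ℤ) + (j.val : ℤ)) *
      ((-1:MvPolynomial (Fin n) ℤ)^(n - 1 - j.val) * Esub n (Finset.univ.erase r) (n - 1 - j.val))
    = X r ^ (kappa i.val + (n - 1 - i.val))
  rw [Fin.sum_univ_eq_sum_range (fun j => hsymInt n ((kappa i.val : ℤ) - (i.val : ℤ) + (j : ℤ)) *
      ((-1:MvPolynomial (Fin n) ℤ)^(n - 1 - j) * Esub n (Finset.univ.erase r) (n - 1 - j)))]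
  rw [← Finset.sum_range_reflect]
  rw [← Dlemma n r (kappa i.val + (n - 1 - i.val))]
  refine Finset.sum_congr rfl fun k hk => ?_
  rw [Finset.mem_range] at hk
  have h1 : n - 1 - (n - 1 - k) = k := by omega
  have h2 : ((kappa i.val : ℤ) - (i.val : ℤ) + ((n - 1 - k : ℕ) : ℤ))
      = ((kappa i.val + (n - 1 - i.val) : ℕ) : ℤ) - (k : ℤ) := by
    have := i.is_lt
    omega
  rw [h1, h2]
  ring

lemma schur_zero (n : ℕ) : schur n (fun _ => 0) = 1 := by
  rw [schur]
  have htri : (Matrix.of fun i j : Fin n =>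
      hsymInt n (((0:ℕ) : ℤ) - (i.val : ℤ) + (j.val : ℤ))).BlockTriangular id := by
    intro i j hij
    simp only [Matrix.of_apply]
    rw [hsymInt, if_pos]
    have : (j : ℕ) < (i : ℕ) := hij
    push_cast
    omega
  rw [Matrix.det_of_upperTriangular htri]
  refine Finset.prod_eq_one fun i _ => ?_
  simp only [Matrix.of_apply]
  rw [hsymInt, if_neg (by push_cast; omega)]
  have : (((0:ℕ):ℤ) - i.val + i.val).toNat = 0 := by push_cast; omega
  rw [this, hsym_zero]

lemma det_Mmat (n : ℕ) : (Mmat n).det = vandermonde n := by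
  have h := JT_mul n (fun _ => 0)
  have hdet := congrArg Matrix.det h
  rw [Matrix.det_mul] at hdet
  have h0 : Matrix.det (Matrix.of fun i j : Fin n =>
      hsymInt n (((fun _ => 0) i.val : ℕ) - (i.val : ℤ) + (j.val : ℤ))) = schur n (fun _ => 0) := rfl
  rw [show (XP n (fun _ => 0)) = Matrix.of (fun i r : Fin n =>
      (X r : MvPolynomial (Fin n) ℤ) ^ (n - 1 - i.val)) from by
    apply Matrix.ext; intro i r; simp [XP]] at hdet
  rw [← vandermonde_eq_det] at hdet
  rw [schur_zero] at h0
  rw [h0, one_mul] at hdet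
  exact hdet

lemma vandermonde_mul_schur (n : ℕ) (kappa : ℕ → ℕ) :
    vandermonde n * schur n kappa = (XP n kappa).det := by
  rw [← JT_mul n kappa, Matrix.det_mul, det_Mmat, schur, mul_comm]

lemma prod_X_pow_univ (n : ℕ) (f : Fin n → ℕ) :
    (∏ i : Fin n, (X i : MvPolynomial (Fin n) ℤ) ^ f i)
      = monomial (Finsupp.equivFunOnFinite.symm f) 1 := by
  set s : Fin n →₀ ℕ := Finsupp.equivFunOnFinite.symm f with hs
  have hf : ∀ i, f i = s i := fun i => rfl
  rw [← prod_X_pow_eq_monomial]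
  refine (Finset.prod_congr rfl fun i _ => by rw [hf]).trans ?_
  exact (Finset.prod_subset (Finset.subset_univ s.support)
    (fun x _ hx => by
      rw [Finsupp.notMem_support_iff] at hx
      rw [hx, pow_zero])).symm


end KostkaAux

/-- For partitions `λ, μ` of `n` with at most `n` parts, the Kostka number `K_{λμ}`
equals the Littlewood–Richardson coefficient `c_{κλ}^ν` where `ν_i = ∑_{j≥i} μ_j`
and `κ_i = ∑_{j≥i+1} μ_j` (indices `0`-based). -/
theorem kostka_eq_lrCoeff (n : ℕ) (l m : ℕ →₀ ℕ) (hl : IsPtn l) (hm : IsPtn m)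
    (hsl : psize l = n) (hsm : psize m = n)
    (hln : ∀ i, n ≤ i → l i = 0) (hmn : ∀ i, n ≤ i → m i = 0) :
    kostka n l m =
      lrCoeff n (fun i => ∑ j ∈ Finset.Ico (i + 1) n, m j) l
        (fun i => ∑ j ∈ Finset.Ico i n, m j) := by
  set ν : ℕ → ℕ := fun i => ∑ j ∈ Finset.Ico i n, m j with hν
  have νmono : ∀ a b : ℕ, a ≤ b → ν b ≤ ν a := by
    intro a b hab
    exact Finset.sum_le_sum_of_subset (Finset.Ico_subset_Ico hab le_rfl)
  have νstep : ∀ a : ℕ, a < n → ν a = m a + ν (a + 1) := by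
    intro a ha
    exact Finset.sum_eq_sum_Ico_succ_bot ha m
  rw [lrCoeff, vandermonde_mul_schur, Matrix.det_apply', Finset.sum_mul, coeff_sum]
  -- weight finsupp for a permutation
  set w : Equiv.Perm (Fin n) → (Fin n →₀ ℕ) := fun σ =>
    Finsupp.equivFunOnFinite.symm
      (fun i => ν ((σ i).val + 1) + (n - 1 - (σ i).val)) with hw
  have hterm : ∀ σ : Equiv.Perm (Fin n),
      coeff (staircase n ν) ((((Equiv.Perm.sign σ : ℤ) : MvPolynomial (Fin n) ℤ))
          * (∏ i : Fin n, XP n (fun t => ν (t+1)) (σ i) i) * schur n l)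
        = (Equiv.Perm.sign σ : ℤ) *
            (if w σ ≤ staircase n ν then coeff (staircase n ν - w σ) (schur n l) else 0) := by
    intro σ
    have hprod : (∏ i : Fin n, XP n (fun t => ν (t+1)) (σ i) i) = monomial (w σ) 1 := by
      rw [hw]
      rw [← prod_X_pow_univ n (fun i => ν ((σ i).val + 1) + (n - 1 - (σ i).val))]
      rfl
    rw [hprod, mul_assoc]
    rw [show (((Equiv.Perm.sign σ : ℤ)) : MvPolynomial (Fin n) ℤ)
        = C ((Equiv.Perm.sign σ : ℤ)) from (eq_intCast (C : ℤ →+* MvPolynomial (Fin n) ℤ) _).symm]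
    rw [coeff_C_mul, coeff_monomial_mul']
    split_ifs with h
    · rw [one_mul]
    · rfl
  rw [Finset.sum_congr rfl (fun σ _ => hterm σ)]
  rw [Finset.sum_eq_single (1 : Equiv.Perm (Fin n))]
  · -- identity term
    have hle : w 1 ≤ staircase n ν := by
      rw [Finsupp.le_def]
      intro i
      have h1 : (w 1) i = ν (i.val + 1) + (n - 1 - i.val) := rfl
      have h2 : (staircase n ν) i = ν i.val + (n - 1 - i.val) := rfl
      rw [h1, h2]
      have := νmono i.val (i.val+1) (Nat.le_succ _)
      omega
    rw [if_pos hle]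
    have hsub : staircase n ν - w 1 = Finsupp.equivFunOnFinite.symm (fun i : Fin n => m i.val) := by
      ext i
      rw [Finsupp.tsub_apply]
      have h1 : (w 1) i = ν (i.val + 1) + (n - 1 - i.val) := rfl
      have h2 : (staircase n ν) i = ν i.val + (n - 1 - i.val) := rfl
      have h3 : (Finsupp.equivFunOnFinite.symm (fun i : Fin n => m i.val)) i = m i.val := rfl
      rw [h1, h2, h3]
      have := νstep i.val i.is_lt
      omega
    rw [hsub]
    simp [kostka]
  · -- non-identity terms vanish
    intro σ _ hσ
    rw [if_neg, mul_zero]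
    intro hle
    apply hσ
    rw [Finsupp.le_def] at hle
    have hstep : ∀ i : Fin n, i.val ≤ (σ i).val := by
      intro i
      by_contra hcon
      push_neg at hcon
      have h1 := hle i
      have h2 : (w σ) i = ν ((σ i).val + 1) + (n - 1 - (σ i).val) := rfl
      have h3 : (staircase n ν) i = ν i.val + (n - 1 - i.val) := rfl
      rw [h2, h3] at h1
      have h4 : ν i.val ≤ ν ((σ i).val + 1) := νmono _ _ (by omega)
      have h5 := i.is_lt
      omega
    have hsum : ∑ i : Fin n, (i.val : ℕ) = ∑ i : Fin n, ((σ i).val : ℕ) :=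
      (Equiv.sum_comp σ Fin.val).symm
    have hall := (Finset.sum_eq_sum_iff_of_le (fun i _ => hstep i)).1 hsum
    ext i
    exact ((hall i (Finset.mem_univ i)).symm ▸ rfl : (σ i).val = i.val)
  · intro h
    exact absurd (Finset.mem_univ _) h
end

section
/- Conjugation of partitions intertwines averaging with sorting: for partitions λ and μ, the conjugate of the coordinate-wise ceiling average ⌈(λ+μ)/2⌉ equals sort₁(λ', μ'), and the conjugate of the floor average ⌊(λ+μ)/2⌋ equals sort₂(λ', μ'). Here λ' denotes the conjugate partition, λ' ∪ μ' = (ν₁, ν₂, ν₃, …) is the weakly decreasing rearrangement of all parts of λ' and μ', sort₁(λ',μ') = (ν₁, ν₃, ν₅, …) and sort₂(λ',μ') = (ν₂, ν₄, ν₆, …). -/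
/-- The conjugate partition: `(conj f) j` is the number of parts of `f` exceeding `j`
(`0`-indexed, so `conj f 0` is the number of nonzero parts). -/
noncomputable def conj (f : ℕ → ℕ) : ℕ → ℕ := fun j => Nat.card {i : ℕ // j < f i}

/-- `λ ∪ μ`: the weakly decreasing rearrangement of all the parts of `λ` and `μ`,
via the identity `(λ ∪ μ)' = λ' + μ'`: the `r`-th part (0-indexed) is the number of
`v` with `λ'_v + μ'_v > r`. -/
noncomputable def unionParts (f g : ℕ → ℕ) : ℕ → ℕ :=
  fun r => Nat.card {v : ℕ // r < conj f v + conj g v}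

/-- `sort₁(λ,μ) = (ν₁, ν₃, ν₅, …)` where `λ ∪ μ = (ν₁, ν₂, …)`. -/
noncomputable def sort1 (f g : ℕ → ℕ) : ℕ → ℕ := fun r => unionParts f g (2 * r)

/-- `sort₂(λ,μ) = (ν₂, ν₄, ν₆, …)` where `λ ∪ μ = (ν₁, ν₂, …)`. -/
noncomputable def sort2 (f g : ℕ → ℕ) : ℕ → ℕ := fun r => unionParts f g (2 * r + 1)

lemma mem_iff_lt_card (S : Set ℕ) (hFin : S.Finite)
    (hdc : ∀ i j, i ≤ j → j ∈ S → i ∈ S) :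
    ∀ i, i ∈ S ↔ i < Nat.card S := by
  intro i
  constructor
  · intro hi
    have h1 : Set.Iic i ⊆ S := fun j hj => hdc j i hj hi
    have h3 := Nat.card_mono hFin h1
    have h2 : Nat.card (Set.Iic i) = i + 1 := by simp
    omega
  · intro hi
    by_contra hn
    have h1 : S ⊆ Set.Iio i := by
      intro j hj
      by_contra hji
      exact hn (hdc i j (le_of_not_gt hji) hj)
    have h3 := Nat.card_mono (Set.finite_Iio i) h1
    have h2 : Nat.card (Set.Iio i) = i := by simp
    omega

lemma conj_iff (f : ℕ →₀ ℕ) (hf : IsPtn f) (v i : ℕ) : v < f i ↔ i < conj f v := by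
  have hFin : {i : ℕ | v < f i}.Finite := by
    apply f.finite_support.subset
    intro i hi
    simp only [Set.mem_setOf_eq] at hi
    simp only [Function.mem_support]
    omega
  have hdc : ∀ i j, i ≤ j → j ∈ {i : ℕ | v < f i} → i ∈ {i : ℕ | v < f i} := by
    intro i j hij hj
    simp only [Set.mem_setOf_eq] at *
    exact lt_of_lt_of_le hj (hf i j hij)
  exact mem_iff_lt_card _ hFin hdc i

lemma conj_conj (f : ℕ →₀ ℕ) (hf : IsPtn f) (i : ℕ) : conj (conj f) i = f i := by
  show Nat.card {v : ℕ // i < conj f v} = f i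
  have : Nat.card {v : ℕ // i < conj f v} = Nat.card {v : ℕ // v < f i} :=
    Nat.card_congr (Equiv.subtypeEquivRight fun v => (conj_iff f hf v i).symm)
  rw [this]
  have : Nat.card {v : ℕ // v < f i} = Nat.card (Set.Iio (f i)) := rfl
  rw [this]
  simp

/-- Conjugation intertwines averaging with sorting:
`⌈(λ+μ)/2⌉' = sort₁(λ', μ')` and `⌊(λ+μ)/2⌋' = sort₂(λ', μ')`. -/
theorem conj_average_eq_sort (l m : ℕ →₀ ℕ) (hl : IsPtn l) (hm : IsPtn m) :
    (∀ r, conj (fun i => (l i + m i + 1) / 2) r = sort1 (conj l) (conj m) r) ∧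
    (∀ r, conj (fun i => (l i + m i) / 2) r = sort2 (conj l) (conj m) r) := by
  constructor
  · intro r
    show Nat.card {i : ℕ // r < (l i + m i + 1) / 2} =
      Nat.card {v : ℕ // 2 * r < conj (conj l) v + conj (conj m) v}
    apply Nat.card_congr
    apply Equiv.subtypeEquivRight
    intro x
    rw [conj_conj l hl, conj_conj m hm]
    omega
  · intro r
    show Nat.card {i : ℕ // r < (l i + m i) / 2} =
      Nat.card {v : ℕ // 2 * r + 1 < conj (conj l) v + conj (conj m) v}
    apply Nat.card_congr
    apply Equiv.subtypeEquivRight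
    intro x
    rw [conj_conj l hl, conj_conj m hm]
    omega
end

section
/- Let i < j ≤ k < l be nonnegative integers with j + k = i + l, and fix integers d₁, d₂, n₃, n₄ ≥ 0 with x = 2d₂ + d₁. Then ((n₃−1 ≤ (j+k−x)/2 ≤ n₄))·((|k−j| ≤ d₁)) + ((n₃ ≤ (j+k−x+1)/2 ≤ n₄))·((|k−j| ≤ d₁+1)) ≥ ((n₃−1 ≤ (i+l−x)/2 ≤ n₄))·((|l−i| ≤ d₁)) + ((n₃ ≤ (i+l−x+1)/2 ≤ n₄))·((|l−i| ≤ d₁+1)), where ((P)) denotes the indicator of proposition P and the inequalities involving /2 are interpreted over rationals. -/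
open Classical in
/-- The indicator `((P))` of a proposition: `1` if `P` holds, `0` otherwise. -/
noncomputable def ind (P : Prop) : ℕ := if P then 1 else 0

open Classical in
lemma ind_le_ind {P Q : Prop} (h : P → Q) : ind P ≤ ind Q := by
  unfold ind; split_ifs with hp hq <;> simp_all

/-- The double-hook case indicator inequality of Rosas's formula: for `i < j ≤ k < l`
with `j + k = i + l` and `x = 2d₂ + d₁`,
`((n₃-1 ≤ (j+k-x)/2 ≤ n₄))((|k-j| ≤ d₁)) + ((n₃ ≤ (j+k-x+1)/2 ≤ n₄))((|k-j| ≤ d₁+1))`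
dominates the corresponding expression in `(i, l)`. -/
theorem double_hook_indicator_ineq (i j k l d1 d2 n3 n4 : ℕ)
    (h1 : i < j) (h2 : j ≤ k) (h3 : k < l) (h4 : j + k = i + l) :
    ind ((n3 : ℚ) - 1 ≤ ((i : ℚ) + l - (2 * d2 + d1)) / 2 ∧
          ((i : ℚ) + l - (2 * d2 + d1)) / 2 ≤ n4) *
        ind (|(l : ℤ) - (i : ℤ)| ≤ (d1 : ℤ)) +
      ind ((n3 : ℚ) ≤ ((i : ℚ) + l - (2 * d2 + d1) + 1) / 2 ∧
          ((i : ℚ) + l - (2 * d2 + d1) + 1) / 2 ≤ n4) *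
        ind (|(l : ℤ) - (i : ℤ)| ≤ (d1 : ℤ) + 1) ≤
    ind ((n3 : ℚ) - 1 ≤ ((j : ℚ) + k - (2 * d2 + d1)) / 2 ∧
          ((j : ℚ) + k - (2 * d2 + d1)) / 2 ≤ n4) *
        ind (|(k : ℤ) - (j : ℤ)| ≤ (d1 : ℤ)) +
      ind ((n3 : ℚ) ≤ ((j : ℚ) + k - (2 * d2 + d1) + 1) / 2 ∧
          ((j : ℚ) + k - (2 * d2 + d1) + 1) / 2 ≤ n4) *
        ind (|(k : ℤ) - (j : ℤ)| ≤ (d1 : ℤ) + 1) := by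
  have hq : ((i : ℚ) + l) = (j : ℚ) + k := by
    have : ((j+k : ℕ) : ℚ) = ((i+l : ℕ) : ℚ) := by rw [h4]
    push_cast at this; linarith
  rw [hq]
  have habs : |(k : ℤ) - (j : ℤ)| ≤ |(l : ℤ) - (i : ℤ)| := by
    have hki : (k : ℤ) - j ≥ 0 := by
      have : (j:ℤ) ≤ k := by exact_mod_cast h2
      omega
    have hli : (l : ℤ) - i ≥ 0 := by
      have : (i:ℤ) < j := by exact_mod_cast h1
      have : (k:ℤ) < l := by exact_mod_cast h3
      omega
    rw [abs_of_nonneg hki, abs_of_nonneg hli]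
    have h4' : (j:ℤ) + k = i + l := by exact_mod_cast h4
    have : (i:ℤ) < j := by exact_mod_cast h1
    omega
  gcongr <;> exact ind_le_ind fun h => le_trans habs h
end

section
/- With Γ as in the lattice-point reachability setup, for integers i < j ≤ k < l with j+k = i+l, the point (i, l+1) satisfies: every point reachable from (i, l+1) by southwest/northwest moves is also reachable from (j, k+1). Consequently Γ(a,b,c,d)(j, k+1) ≥ Γ(a,b,c,d)(i, l+1) for all a,b,c,d ≥ 0. -/
/-- `(x,y) ⇝ (u,v)`: `(u,v)` is reachable from `(x,y)` by southwest/northwest unit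
steps; equivalently `u ≤ x`, `u + v ≡ x + y (mod 2)` and `|v - y| ≤ x - u`. -/
def Reach (x y u v : ℕ) : Prop :=
  u ≤ x ∧ (x + y) % 2 = (u + v) % 2 ∧ |(v : ℤ) - (y : ℤ)| ≤ (x : ℤ) - (u : ℤ)

/-- `Γ(a,b,c,d)(x,y)`: the number of lattice points of `ℕ²` in the rectangle
`[a, a+b] × [c, c+d]` reachable from `(x,y)`. -/
noncomputable def Gamma (a b c d x y : ℕ) : ℕ :=
  Nat.card {p : ℕ × ℕ // a ≤ p.1 ∧ p.1 ≤ a + b ∧ c ≤ p.2 ∧ p.2 ≤ c + d ∧ Reach x y p.1 p.2}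

/-- For `i < j ≤ k < l` with `j + k = i + l`: every point reachable from `(i, l+1)` is
reachable from `(j, k+1)`; consequently `Γ(a,b,c,d)(j,k+1) ≥ Γ(a,b,c,d)(i,l+1)`. -/
theorem reach_mono_and_gamma (i j k l : ℕ)
    (h1 : i < j) (h2 : j ≤ k) (h3 : k < l) (h4 : j + k = i + l) :
    (∀ u v : ℕ, Reach i (l + 1) u v → Reach j (k + 1) u v) ∧
    ∀ a b c d : ℕ, Gamma a b c d i (l + 1) ≤ Gamma a b c d j (k + 1) := by
  have hmono : ∀ u v : ℕ, Reach i (l + 1) u v → Reach j (k + 1) u v := by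
    intro u v ⟨hu, hpar, habs⟩
    refine ⟨hu.trans h1.le, ?_, ?_⟩
    · omega
    · rw [abs_le] at habs ⊢
      have : (j : ℤ) + k = i + l := by exact_mod_cast h4
      constructor <;> push_cast at * <;> omega
  refine ⟨hmono, fun a b c d => ?_⟩
  have hsub : {p : ℕ × ℕ | a ≤ p.1 ∧ p.1 ≤ a + b ∧ c ≤ p.2 ∧ p.2 ≤ c + d ∧ Reach i (l+1) p.1 p.2}
      ⊆ {p : ℕ × ℕ | a ≤ p.1 ∧ p.1 ≤ a + b ∧ c ≤ p.2 ∧ p.2 ≤ c + d ∧ Reach j (k+1) p.1 p.2} := by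
    rintro ⟨u, v⟩ ⟨h₁, h₂, h₃, h₄, h₅⟩
    exact ⟨h₁, h₂, h₃, h₄, hmono u v h₅⟩
  have hfin : {p : ℕ × ℕ | a ≤ p.1 ∧ p.1 ≤ a + b ∧ c ≤ p.2 ∧ p.2 ≤ c + d ∧
      Reach j (k+1) p.1 p.2}.Finite := by
    apply Set.Finite.subset ((Set.finite_Icc 0 (a+b)).prod (Set.finite_Icc 0 (c+d)))
    rintro ⟨u, v⟩ ⟨_, h₂, _, h₄, _⟩
    exact ⟨⟨Nat.zero_le _, h₂⟩, ⟨Nat.zero_le _, h₄⟩⟩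
  have := Set.ncard_le_ncard hsub hfin
  rw [← Nat.card_coe_set_eq, ← Nat.card_coe_set_eq] at this
  exact this
end
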